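/- Fix a cylinder function h : {0,1}^{ℤ^d} → ℝ. There exists a finite constant C₀ = C₀(h, ρ) such that ∫ | Σ_{x∈T^d_n} J_x ( h(τ_x η) − ~h(ρ) ) | f dν^n_ρ ≤ (1/γ) ( H_n(f) + log 2 ) + C₀ γ n^d ‖J‖²_∞ e^{C₀ γ ‖J‖_∞} for every function J : T^d_n → ℝ, every γ > 0, every density f with respect to ν^n_ρ, and every n large enough that the support of h fits in a cube of side n, where ‖J‖_∞ = max_x |J(x)|. -/

import Mathlib

open Finset

/-- The discrete torus `(ℤ/nℤ)^d`. -/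
abbrev Torus (d n : ℕ) := Fin d → ZMod n

/-- Particle configurations on the discrete torus. -/
abbrev Cfg (d n : ℕ) := Torus d n → Bool

/-- Particle configurations on `ℤ^d`. -/
abbrev ZCfg (d : ℕ) := (Fin d → ℤ) → Bool

/-- Real (0/1) value of a configuration at a site. -/
noncomputable def cval {d n : ℕ} (η : Cfg d n) (x : Torus d n) : ℝ :=
  if η x then 1 else 0

/-- Real (0/1) value of a `ℤ^d` configuration at a site. -/
noncomputable def zval {d : ℕ} (η : ZCfg d) (z : Fin d → ℤ) : ℝ :=
  if η z then 1 else 0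

/-- The Bernoulli(ρ) product weight of a configuration. -/
noncomputable def bern (d n : ℕ) [NeZero n] (ρ : ℝ) (η : Cfg d n) : ℝ :=
  ∏ x : Torus d n, (if η x then ρ else 1 - ρ)

/-- Expectation with respect to the Bernoulli(ρ) product measure `ν^n_ρ`. -/
noncomputable def expect (d n : ℕ) [NeZero n] (ρ : ℝ) (f : Cfg d n → ℝ) : ℝ :=
  ∑ η : Cfg d n, bern d n ρ η * f η

/-- A density with respect to `ν^n_ρ`. -/
def IsDensity (d n : ℕ) [NeZero n] (ρ : ℝ) (f : Cfg d n → ℝ) : Prop :=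
  (∀ η, 0 ≤ f η) ∧ expect d n ρ f = 1

/-- Relative entropy `H_n(f) = ∫ f log f dν^n_ρ`. -/
noncomputable def entropy (d n : ℕ) [NeZero n] (ρ : ℝ) (f : Cfg d n → ℝ) : ℝ :=
  expect d n ρ (fun η => f η * Real.log (f η))

/-- Sup norm of a function on the discrete torus. -/
noncomputable def supNorm {d n : ℕ} [NeZero n] (F : Torus d n → ℝ) : ℝ :=
  ⨆ x : Torus d n, |F x|

/-- The canonical unit vector `e_j` of the torus. -/
def unitT (d n : ℕ) (j : Fin d) : Torus d n := fun i => if i = j then 1 else 0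

/-- The canonical unit vector `e_j` of `ℤ^d`. -/
def unitZ (d : ℕ) (j : Fin d) : Fin d → ℤ := fun i => if i = j then 1 else 0

/-- `σ^x η` : flip the value of the configuration at `x`. -/
def flipCfg {d n : ℕ} (x : Torus d n) (η : Cfg d n) : Cfg d n :=
  Function.update η x (!η x)

/-- `σ^{x,y} η` : exchange the values of the configuration at `x` and `y`. -/
def swapCfg {d n : ℕ} (x y : Torus d n) (η : Cfg d n) : Cfg d n :=
  fun z => if z = x then η y else if z = y then η x else η z

/-- `τ_x η` : translation of a torus configuration. -/
def shiftCfg {d n : ℕ} (x : Torus d n) (η : Cfg d n) : Cfg d n := fun z => η (x + z)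

/-- Canonical projection `ℤ^d → (ℤ/nℤ)^d`. -/
def toTorus {d n : ℕ} (z : Fin d → ℤ) : Torus d n := fun i => ((z i : ℤ) : ZMod n)

/-- Periodic identification of a torus configuration with a `ℤ^d` configuration. -/
def liftCfg {d n : ℕ} (η : Cfg d n) : ZCfg d := fun z => η (toTorus z)

/-- `τ_y η` : translation of a `ℤ^d` configuration. -/
def zshift {d : ℕ} (y : Fin d → ℤ) (η : ZCfg d) : ZCfg d := fun z => η (y + z)

/-- flip the value of a `ℤ^d` configuration at `z`. -/
def zflip {d : ℕ} (z : Fin d → ℤ) (η : ZCfg d) : ZCfg d :=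
  Function.update η z (!η z)

/-- A cylinder function on `{0,1}^{ℤ^d}` : a function depending only on the
(finitely many) coordinates in `supp`. -/
structure CylFun (d : ℕ) where
  supp : Finset (Fin d → ℤ)
  toFun : ZCfg d → ℝ
  cyl : ∀ η ζ : ZCfg d, (∀ z ∈ supp, η z = ζ z) → toFun η = toFun ζ

/-- `~h(ρ)` : expectation of a cylinder function under the Bernoulli(ρ) product
measure on `{0,1}^{ℤ^d}` (computed over its support). -/
noncomputable def CylFun.tilde {d : ℕ} (h : CylFun d) (ρ : ℝ) : ℝ :=
  ∑ σ : {z // z ∈ h.supp} → Bool,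
    (∏ z : {z // z ∈ h.supp}, if σ z then ρ else 1 - ρ) *
      h.toFun (fun z => if hz : z ∈ h.supp then σ ⟨z, hz⟩ else false)

/-- `S` is contained in a cube of side `n` (so that periodic identification on the
torus of side `n` is faithful on `S`). -/
def FitsCube (d : ℕ) (S : Finset (Fin d → ℤ)) (n : ℕ) : Prop :=
  ∃ a : Fin d → ℤ, ∀ z ∈ S, ∀ i, a i ≤ z i ∧ z i < a i + (n : ℤ)

/-- `c(τ_x η)` : a cylinder function evaluated on the translate of a torus
configuration, via periodic identification. -/
noncomputable def cylAt {d n : ℕ} (c : CylFun d) (x : Torus d n) (η : Cfg d n) : ℝ :=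
  c.toFun (liftCfg (shiftCfg x η))

/-- The speed-change exclusion generator `L^S_n`. -/
noncomputable def genS (d n : ℕ) [NeZero n] (c : Fin d → CylFun d)
    (h : Cfg d n → ℝ) (η : Cfg d n) : ℝ :=
  ∑ x : Torus d n, ∑ j : Fin d,
    cylAt (c j) x η * (h (swapCfg x (x + unitT d n j) η) - h η)

/-- The voter generator `L^V_n` (the sum over the neighbours `y` of `x` being the
sum over `y = x ± e_j`, `1 ≤ j ≤ d`). -/
noncomputable def genV (d n : ℕ) [NeZero n] (h : Cfg d n → ℝ) (η : Cfg d n) : ℝ :=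
  ∑ x : Torus d n, ∑ j : Fin d,
    ((cval η (x + unitT d n j) - cval η x) ^ 2 * (h (flipCfg x η) - h η)
      + (cval η (x - unitT d n j) - cval η x) ^ 2 * (h (flipCfg x η) - h η))

/-- The adjoint in `L²(ν^n_ρ)` of a linear operator on functions on `Ω_n`. -/
noncomputable def adjoint (d n : ℕ) [NeZero n] (ρ : ℝ)
    (L : (Cfg d n → ℝ) → Cfg d n → ℝ) (g : Cfg d n → ℝ) (η : Cfg d n) : ℝ :=
  (∑ ζ : Cfg d n, bern d n ρ ζ * g ζ * L (fun ξ => if ξ = η then 1 else 0) ζ)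
    / bern d n ρ η

/-- The Dirichlet form `I_n(f)`. -/
noncomputable def dirichlet (d n : ℕ) [NeZero n] (ρ : ℝ) (c : Fin d → CylFun d)
    (f : Cfg d n → ℝ) : ℝ :=
  (1 / 2) * ∑ j : Fin d, ∑ x : Torus d n,
    expect d n ρ (fun η =>
      cylAt (c j) x η *
        (Real.sqrt (f (swapCfg x (x + unitT d n j) η)) - Real.sqrt (f η)) ^ 2)

/-- The sequence `R_d(n)`. -/
noncomputable def Rd (d n : ℕ) (a : ℝ) : ℝ :=
  if d = 1 then Real.sqrt a
  else if d = 2 then a * Real.log (n : ℝ)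
  else a * (n : ℝ) ^ (d - 2)

/-- The sequence `g_d(ℓ)`. -/
noncomputable def gd (d ℓ : ℕ) : ℝ :=
  if d = 1 then (ℓ : ℝ) else if d = 2 then Real.log (ℓ : ℝ) else 1

/-- `ω_x = (η_x - ρ)/√(ρ(1-ρ))`. -/
noncomputable def omega (d n : ℕ) [NeZero n] (ρ : ℝ) (η : Cfg d n) (x : Torus d n) : ℝ :=
  (cval η x - ρ) / Real.sqrt (ρ * (1 - ρ))

/-- `ω_{x+B} = ∏_{z ∈ B} ω_{x+z}`. -/
noncomputable def omegaProd (d n : ℕ) [NeZero n] (ρ : ℝ) (B : Finset (Fin d → ℤ))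
    (η : Cfg d n) (x : Torus d n) : ℝ :=
  ∏ z ∈ B, omega d n ρ η (x + toTorus z)

/-- `V(η) = 2 Σ_j Σ_x ω_x ω_{x+e_j}`. -/
noncomputable def Vfun (d n : ℕ) [NeZero n] (ρ : ℝ) (η : Cfg d n) : ℝ :=
  2 * ∑ j : Fin d, ∑ x : Torus d n, omega d n ρ η x * omega d n ρ η (x + unitT d n j)

/-- The cube `Λ_ℓ = {0,…,ℓ-1}^d ⊂ ℤ^d`. -/
noncomputable def box (d ℓ : ℕ) : Finset (Fin d → ℤ) :=
  Fintype.piFinset fun _ => Finset.Ico (0 : ℤ) (ℓ : ℤ)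

/-- The uniform measure `m_ℓ` on `Λ_ℓ`. -/
noncomputable def mker (d ℓ : ℕ) (z : Fin d → ℤ) : ℝ :=
  if z ∈ box d ℓ then ((ℓ : ℝ) ^ d)⁻¹ else 0

/-- The convolution `m^{(2)}_ℓ = m_ℓ ∗ m_ℓ`. -/
noncomputable def m2ker (d ℓ : ℕ) (z : Fin d → ℤ) : ℝ :=
  ∑ y ∈ box d ℓ, mker d ℓ y * mker d ℓ (z - y)

/-- `ω^ℓ_x = Σ_y m^{(2)}_ℓ(y) ω_{x+y}`. -/
noncomputable def omegaL (d n : ℕ) [NeZero n] (ρ : ℝ) (ℓ : ℕ) (η : Cfg d n)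
    (x : Torus d n) : ℝ :=
  ∑ y ∈ box d (2 * ℓ - 1), m2ker d ℓ y * omega d n ρ η (x + toTorus y)

/-- `V_ℓ(η) = 2 Σ_j Σ_x ω_x ω^ℓ_{x+e_j}`. -/
noncomputable def VfunL (d n : ℕ) [NeZero n] (ρ : ℝ) (ℓ : ℕ) (η : Cfg d n) : ℝ :=
  2 * ∑ j : Fin d, ∑ x : Torus d n, omega d n ρ η x * omegaL d n ρ ℓ η (x + unitT d n j)

/-- The ℓ¹ norm on `ℤ^d`. -/
def norm1 {d : ℕ} (z : Fin d → ℤ) : ℤ := ∑ i, |z i|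

/-- `xA` is a maximal element of `A` for the coordinatewise partial order. -/
def IsMaximalIn {d : ℕ} (A : Finset (Fin d → ℤ)) (xA : Fin d → ℤ) : Prop :=
  xA ∈ A ∧ ∀ y ∈ A, (∀ i, xA i ≤ y i) → y = xA

/-- `H^{(ℓ)}_{k,x}` built from a flow `Φ`. -/
noncomputable def Hflow (d n : ℕ) [NeZero n] (ρ : ℝ) (ℓ : ℕ)
    (Φ : (Fin d → ℤ) → (Fin d → ℤ) → ℝ) (A : Finset (Fin d → ℤ)) (xA : Fin d → ℤ)
    (G : Torus d n → ℝ) (k : Fin d) (x : Torus d n) (η : Cfg d n) : ℝ :=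
  ∑ y ∈ (box d (2 * ℓ - 1)).filter (fun y => y + unitZ d k ∈ box d (2 * ℓ - 1)),
    Φ y (y + unitZ d k) * G (x - toTorus xA - toTorus y) *
      omegaProd d n ρ (A.erase xA) η (x - toTorus xA - toTorus y)

/-!
Write `Y_x η = h(τ_x η) - ~h(ρ)`. By the entropy inequality,
`γ ∫ |Σ_x J_x Y_x| f dν ≤ H_n(f) + log ∫ exp (γ |Σ_x J_x Y_x|) dν`, so it suffices to bound this
exponential moment by `2 exp (C γ² n^d ‖J‖² e^{C γ ‖J‖})`. The `Y_x` are bounded and centred, and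
`Y_x`, `Y_y` are independent as soon as the translates `x + supp h` and `y + supp h` are disjoint.
A greedy colouring of the overlap graph of these translates, whose degrees are at most
`|supp h|²`, splits the sum into `p = |supp h|² + 1` classes of independent terms. Jensen's
inequality for `exp` over the classes, independence within a class and
`e^u ≤ 1 + u + u² e^{|u|}` for each term give the bound.
-/

lemma one_sub_mul_exp_le_one (u : ℝ) : (1 - u) * Real.exp u ≤ 1 := by
  have h := mul_le_mul_of_nonneg_right (Real.one_sub_le_exp_neg u) (Real.exp_pos u).le
  rwa [← Real.exp_add, neg_add_cancel, Real.exp_zero] at h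

/-- From `(1 - u) e^u ≤ 1`; for `u < 0` through `1 / (1 - u) ≤ 1 + u + u²`, as
`(1 - u) (1 + u + u²) = 1 - u³`. -/
lemma exp_le_one_add_add_sq_mul_exp_abs (u : ℝ) :
    Real.exp u ≤ 1 + u + u ^ 2 * Real.exp |u| := by
  have key := one_sub_mul_exp_le_one u
  rcases le_or_gt 0 u with hu | hu
  · rw [abs_of_nonneg hu]
    nlinarith [Real.exp_pos u]
  · have h1 : 1 ≤ Real.exp |u| := Real.one_le_exp (abs_nonneg u)
    nlinarith [Real.exp_pos u, sq_nonneg u, mul_pos (neg_pos.mpr hu) (sq_pos_of_neg hu)]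

lemma mul_le_mul_log_sub_add_exp {u : ℝ} (hu : 0 ≤ u) (v : ℝ) :
    u * v ≤ u * Real.log u - u + Real.exp v := by
  rcases hu.eq_or_lt with rfl | hu
  · simpa using (Real.exp_pos v).le
  · have h := Real.add_one_le_exp (v - Real.log u)
    rw [Real.exp_sub, Real.exp_log hu, le_div_iff₀ hu] at h
    linarith

lemma exp_sum_le_sum_exp_card_mul {κ : Type*} [Fintype κ] [Nonempty κ] (u : κ → ℝ) :
    Real.exp (∑ c, u c) ≤ ∑ c, (Fintype.card κ : ℝ)⁻¹ * Real.exp (Fintype.card κ * u c) := by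
  have hp : (0 : ℝ) < Fintype.card κ := by exact_mod_cast Fintype.card_pos
  have := convexOn_exp.map_sum_le (t := univ) (w := fun _ => (Fintype.card κ : ℝ)⁻¹)
    (p := fun c => Fintype.card κ * u c) (fun _ _ => by positivity)
    (by simp [card_univ, hp.ne']) (fun _ _ => Set.mem_univ _)
  simpa [smul_eq_mul, ← mul_assoc, inv_mul_cancel₀ hp.ne'] using this

lemma sum_prod_mul_comp_of_injective {α β : Type*} [Fintype α] [Fintype β] [DecidableEq α]
    [DecidableEq β] {ι : β → α} (hι : Function.Injective ι) {w : Bool → ℝ} (hw : w true + w false = 1)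
    (g : (β → Bool) → ℝ) :
    ∑ η : α → Bool, (∏ x, w (η x)) * g (η ∘ ι) = ∑ σ : β → Bool, (∏ b, w (σ b)) * g σ := by
  classical
  let e : β ⊕ {x // x ∉ Set.range ι} ≃ α :=
    ((Equiv.ofInjective ι hι).sumCongr (Equiv.refl _)).trans (Equiv.sumCompl _)
  let split : (β → Bool) × ({x // x ∉ Set.range ι} → Bool) ≃ (α → Bool) :=
    (Equiv.sumArrowEquivProdArrow _ _ _).symm.trans (e.arrowCongr (Equiv.refl Bool))
  have hsplit : ∀ p s, split p (e s) = Sum.elim p.1 p.2 s := fun ⟨σ, τ⟩ s => by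
    cases s <;> simp [split, Equiv.arrowCongr_apply]
  have hcomp : ∀ p, split p ∘ ι = p.1 := fun p => funext fun b => hsplit p (.inl b)
  have hmass : ∑ τ : {x // x ∉ Set.range ι} → Bool, ∏ c, w (τ c) = 1 := by
    rw [← Fintype.prod_sum (fun _ b => w b)]
    simp [hw]
  rw [← split.sum_comp, Fintype.sum_prod_type]
  refine sum_congr rfl fun σ _ => ?_
  simp only [hcomp, ← e.prod_comp, hsplit, Fintype.prod_sum_type, Sum.elim_inl, Sum.elim_inr]
  rw [← sum_mul, ← mul_sum, hmass, mul_one]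

theorem SimpleGraph.colorable_of_forall_degree_le {V : Type*} [Fintype V] (G : SimpleGraph V)
    [DecidableRel G.Adj] {Δ : ℕ} (hΔ : ∀ v, G.degree v ≤ Δ) : G.Colorable (Δ + 1) := by
  classical
  suffices ∀ s : Finset V, ∃ c : V → Fin (Δ + 1), ∀ v ∈ s, ∀ w ∈ s, G.Adj v w → c v ≠ c w by
    obtain ⟨c, hc⟩ := this univ
    exact ⟨Coloring.mk c fun hvw => hc _ (mem_univ _) _ (mem_univ _) hvw⟩
  intro s
  induction s using Finset.induction_on with
  | empty => exact ⟨0, by simp⟩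
  | insert a s ha ih =>
    obtain ⟨c, hc⟩ := ih
    have hfew : #((G.neighborFinset a).image c) < #(univ : Finset (Fin (Δ + 1))) := by
      calc #((G.neighborFinset a).image c) ≤ G.degree a :=
            card_image_le.trans (G.card_neighborFinset_eq_degree a).le
        _ < Δ + 1 := Nat.lt_succ_of_le (hΔ a)
        _ = _ := (card_fin _).symm
    obtain ⟨k, -, hk⟩ := exists_mem_notMem_of_card_lt_card hfew
    have hfresh : ∀ w, G.Adj a w → k ≠ c w := fun w haw hkw =>
      hk (mem_image.mpr ⟨w, (G.mem_neighborFinset a w).mpr haw, hkw.symm⟩)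
    refine ⟨Function.update c a k, fun v hv w hw hvw => ?_⟩
    rcases eq_or_ne v a with rfl | hva
    · rw [Function.update_self, Function.update_of_ne (G.ne_of_adj hvw).symm]
      exact hfresh w hvw
    rcases eq_or_ne w a with rfl | hwa
    · rw [Function.update_self, Function.update_of_ne hva]
      exact (hfresh v hvw.symm).symm
    rw [Function.update_of_ne hva, Function.update_of_ne hwa]
    exact hc v ((mem_insert.mp hv).resolve_left hva) w ((mem_insert.mp hw).resolve_left hwa) hvw

/-- Translates `x + S`, `y + S` can only overlap when `y ∈ x + (S - S)`, so the overlap graph of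
the translates has degree at most `#S ^ 2`. -/
lemma exists_coloring_disjoint_translates {G : Type*} [AddGroup G] [Fintype G] [DecidableEq G]
    {S : Finset G} {m : ℕ} (hS : #S ≤ m) : ∃ col : G → Fin (m ^ 2 + 1),
      ∀ x y, col x = col y → x ≠ y → Disjoint (S.image (x + ·)) (S.image (y + ·)) := by
  classical
  let overlap : SimpleGraph G :=
    SimpleGraph.fromRel fun x y => ¬Disjoint (S.image (x + ·)) (S.image (y + ·))
  have hdeg : ∀ x, overlap.degree x ≤ m ^ 2 := fun x => by
    rw [← overlap.card_neighborFinset_eq_degree, sq]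
    refine (card_le_card (t := (S ×ˢ S).image fun p => x + p.1 - p.2) fun y hy => ?_).trans
      (card_image_le.trans ((card_product S S).trans_le (Nat.mul_le_mul hS hS)))
    obtain ⟨-, hxy⟩ := (SimpleGraph.fromRel_adj _ x y).mp ((overlap.mem_neighborFinset x y).mp hy)
    obtain ⟨t, htx, hty⟩ := not_disjoint_iff.mp (hxy.elim id fun h hd => h hd.symm)
    obtain ⟨s, hs, rfl⟩ := mem_image.mp htx
    obtain ⟨s', hs', hys'⟩ := mem_image.mp hty
    exact mem_image.mpr ⟨(s, s'), mem_product.mpr ⟨hs, hs'⟩, (eq_sub_of_add_eq hys').symm⟩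
  obtain ⟨C⟩ := overlap.colorable_of_forall_degree_le hdeg
  refine ⟨C, fun x y hxy hne => by_contra fun hov => C.valid ?_ hxy⟩
  exact (SimpleGraph.fromRel_adj _ x y).mpr ⟨hne, .inl hov⟩

def DepOn {d n : ℕ} (F : Cfg d n → ℝ) (A : Finset (Torus d n)) : Prop :=
  ∀ η ζ : Cfg d n, (∀ x ∈ A, η x = ζ x) → F η = F ζ

def splice {d n : ℕ} (A : Finset (Torus d n)) (η ζ : Cfg d n) : Cfg d n :=
  fun x => if x ∈ A then η x else ζ x

lemma splice_splice {d n : ℕ} (A : Finset (Torus d n)) (η ζ : Cfg d n) :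
    splice A (splice A η ζ) (splice A ζ η) = η := by
  funext x
  unfold splice
  split_ifs <;> rfl

lemma injOn_toTorus_of_fitsCube {d n : ℕ} {S : Finset (Fin d → ℤ)} (hS : FitsCube d S n) :
    Set.InjOn (toTorus (n := n)) (S : Set (Fin d → ℤ)) := by
  obtain ⟨a, ha⟩ := hS
  intro z hz z' hz' hzz'
  funext i
  have hdvd : (n : ℤ) ∣ z' i - z i :=
    (ZMod.intCast_eq_intCast_iff_dvd_sub _ _ _).mp (congrFun hzz' i)
  obtain ⟨h₁, h₂⟩ := ha z hz i
  obtain ⟨h₁', h₂'⟩ := ha z' hz' i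
  have := Int.eq_zero_of_abs_lt_dvd hdvd (abs_sub_lt_iff.mpr ⟨by linarith, by linarith⟩)
  linarith

lemma CylFun.exists_abs_le {d : ℕ} (h : CylFun d) : ∃ M, ∀ ζ, |h.toFun ζ| ≤ M := by
  let extend : (h.supp → Bool) → ZCfg d := fun σ z => if hz : z ∈ h.supp then σ ⟨z, hz⟩ else false
  obtain ⟨M, hM⟩ := Finite.bddAbove_range fun σ => |h.toFun (extend σ)|
  refine ⟨M, fun ζ => ?_⟩
  rw [h.cyl ζ (extend fun z => ζ z) fun z hz => by simp [extend, hz]]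
  exact hM ⟨fun z => ζ z, rfl⟩

lemma cylAt_depOn {d n : ℕ} (h : CylFun d) (x : Torus d n) :
    DepOn (cylAt h x) ((h.supp.image toTorus).image (x + ·)) := fun _ _ hηζ =>
  h.cyl _ _ fun _ hz => hηζ _ (mem_image_of_mem _ (mem_image_of_mem _ hz))

section BernoulliField

variable {d n : ℕ} [NeZero n] {ρ : ℝ}

lemma sum_bern : ∑ η : Cfg d n, bern d n ρ η = 1 := by
  simp only [bern]
  rw [← Fintype.prod_sum fun _ (b : Bool) => if b then ρ else 1 - ρ]
  simp

lemma bern_nonneg (hρ₀ : 0 ≤ ρ) (hρ₁ : ρ ≤ 1) (η : Cfg d n) : 0 ≤ bern d n ρ η :=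
  prod_nonneg fun x _ => by split <;> linarith

lemma expect_def (F : Cfg d n → ℝ) : expect d n ρ F = ∑ η, bern d n ρ η * F η := rfl

lemma expect_fun_const (c : ℝ) : expect d n ρ (fun _ => c) = c := by
  rw [expect_def, ← sum_mul, sum_bern, one_mul]

lemma expect_add (F G : Cfg d n → ℝ) :
    expect d n ρ (fun η => F η + G η) = expect d n ρ F + expect d n ρ G := by
  simp only [expect_def, mul_add, sum_add_distrib]

lemma expect_const_mul (c : ℝ) (F : Cfg d n → ℝ) :
    expect d n ρ (fun η => c * F η) = c * expect d n ρ F := by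
  simp only [expect_def, mul_sum]
  exact sum_congr rfl fun η _ => by ring

lemma expect_sum {ι : Type*} (s : Finset ι) (F : ι → Cfg d n → ℝ) :
    expect d n ρ (fun η => ∑ i ∈ s, F i η) = ∑ i ∈ s, expect d n ρ (F i) := by
  simp only [expect_def, mul_sum]
  exact sum_comm

lemma expect_mono (hρ₀ : 0 ≤ ρ) (hρ₁ : ρ ≤ 1) {F G : Cfg d n → ℝ} (hFG : ∀ η, F η ≤ G η) :
    expect d n ρ F ≤ expect d n ρ G :=
  sum_le_sum fun η _ => mul_le_mul_of_nonneg_left (hFG η) (bern_nonneg hρ₀ hρ₁ η)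

lemma expect_nonneg_of_nonneg (hρ₀ : 0 ≤ ρ) (hρ₁ : ρ ≤ 1) {F : Cfg d n → ℝ}
    (hF : ∀ η, 0 ≤ F η) : 0 ≤ expect d n ρ F :=
  sum_nonneg fun η _ => mul_nonneg (bern_nonneg hρ₀ hρ₁ η) (hF η)

lemma expect_pos_of_pos (hρ₀ : 0 ≤ ρ) (hρ₁ : ρ ≤ 1) {F : Cfg d n → ℝ} (hF : ∀ η, 0 < F η) :
    0 < expect d n ρ F := by
  obtain ⟨η, -, hη⟩ : ∃ η ∈ univ, (0 : ℝ) < bern d n ρ η :=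
    exists_lt_of_sum_lt (by simp [sum_bern])
  exact sum_pos' (fun ζ _ => mul_nonneg (bern_nonneg hρ₀ hρ₁ ζ) (hF ζ).le)
    ⟨η, mem_univ _, mul_pos hη (hF η)⟩

lemma bern_mul_bern_splice (A : Finset (Torus d n)) (η ζ : Cfg d n) :
    bern d n ρ (splice A η ζ) * bern d n ρ (splice A ζ η) = bern d n ρ η * bern d n ρ ζ := by
  simp only [bern, ← prod_mul_distrib]
  refine prod_congr rfl fun x _ => ?_
  unfold splice
  split_ifs <;> ring

/-- The exchange `(η, ζ) ↦ (splice A η ζ, splice A ζ η)` preserves `ν ⊗ ν` and turns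
`F η * G ζ` into `F η' * G η'`. -/
lemma expect_mul_of_depOn_of_disjoint {F G : Cfg d n → ℝ} {A B : Finset (Torus d n)}
    (hF : DepOn F A) (hG : DepOn G B) (hAB : Disjoint A B) :
    expect d n ρ (fun η => F η * G η) = expect d n ρ F * expect d n ρ G := by
  let exch : Cfg d n × Cfg d n → Cfg d n × Cfg d n :=
    fun p => (splice A p.1 p.2, splice A p.2 p.1)
  have hexch : Function.Involutive exch := fun p =>
    Prod.ext (splice_splice A p.1 p.2) (splice_splice A p.2 p.1)
  have hFG : ∀ η ζ : Cfg d n,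
      F (splice A η ζ) * G (splice A η ζ) = F η * G ζ := fun η ζ => by
    rw [hF (splice A η ζ) η fun x hx => if_pos hx,
      hG (splice A η ζ) ζ fun x hx => if_neg (disjoint_right.mp hAB hx)]
  calc expect d n ρ (fun η => F η * G η)
      = ∑ p : Cfg d n × Cfg d n, bern d n ρ p.1 * bern d n ρ p.2 * (F p.1 * G p.1) := by
        simp only [Fintype.sum_prod_type, expect_def]
        refine sum_congr rfl fun η _ => ?_
        rw [← sum_mul, ← mul_sum, sum_bern]
        ring
    _ = ∑ p : Cfg d n × Cfg d n,
          bern d n ρ (exch p).1 * bern d n ρ (exch p).2 * (F (exch p).1 * G (exch p).1) :=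
        (Equiv.sum_comp hexch.toPerm _).symm
    _ = expect d n ρ F * expect d n ρ G := by
        simp only [exch, bern_mul_bern_splice, hFG, expect_def, sum_mul_sum,
          Fintype.sum_prod_type]
        exact sum_congr rfl fun η _ => sum_congr rfl fun ζ _ => by ring

lemma expect_prod_of_depOn {ι : Type*} [DecidableEq ι] (s : Finset ι)
    {F : ι → Cfg d n → ℝ} {A : ι → Finset (Torus d n)} (hdep : ∀ i ∈ s, DepOn (F i) (A i))
    (hdisj : (s : Set ι).PairwiseDisjoint A) :
    expect d n ρ (fun η => ∏ i ∈ s, F i η) = ∏ i ∈ s, expect d n ρ (F i) := by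
  induction s using Finset.induction_on with
  | empty => simpa using expect_fun_const (d := d) (n := n) (ρ := ρ) 1
  | insert a s ha ih =>
    rw [coe_insert, Set.pairwiseDisjoint_insert_of_notMem (mem_coe.not.mpr ha)] at hdisj
    have hdep_s : DepOn (fun η => ∏ i ∈ s, F i η) (s.biUnion A) := fun η ζ hηζ =>
      prod_congr rfl fun i hi => hdep i (mem_insert_of_mem hi) η ζ fun x hx =>
        hηζ x (mem_biUnion.mpr ⟨i, hi, hx⟩)
    have hdisj_a : Disjoint (A a) (s.biUnion A) :=
      (disjoint_biUnion_right _ _ _).mpr fun i hi => hdisj.2 i hi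
    simp only [prod_insert ha]
    rw [expect_mul_of_depOn_of_disjoint (hdep a (mem_insert_self a s)) hdep_s hdisj_a,
      ih (fun i hi => hdep i (mem_insert_of_mem hi)) hdisj.1]

lemma expect_cylAt {h : CylFun d} (hfit : FitsCube d h.supp n) (x : Torus d n) :
    expect d n ρ (cylAt h x) = h.tilde ρ := by
  classical
  let ι : h.supp → Torus d n := fun z => x + toTorus z.1
  have hι : Function.Injective ι := fun z z' hzz' =>
    Subtype.ext (injOn_toTorus_of_fitsCube hfit z.2 z'.2 (add_left_cancel hzz'))
  have hcyl : ∀ η, cylAt h x η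
      = h.toFun fun z => if hz : z ∈ h.supp then (η ∘ ι) ⟨z, hz⟩ else false := fun η =>
    h.cyl _ _ fun z hz => by simp [hz, ι, liftCfg, shiftCfg]
  simp only [expect_def, hcyl]
  exact sum_prod_mul_comp_of_injective hι (w := fun b => if b then ρ else 1 - ρ) (by simp)
    fun σ => h.toFun fun z => if hz : z ∈ h.supp then σ ⟨z, hz⟩ else false

lemma expect_cylAt_sub_tilde {h : CylFun d} (hfit : FitsCube d h.supp n) (x : Torus d n) :
    expect d n ρ (fun η => cylAt h x η - h.tilde ρ) = 0 := by
  simp only [sub_eq_add_neg, expect_add, expect_fun_const, expect_cylAt hfit, add_neg_cancel]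

/-- From `u v ≤ u log u - u + e^v` at `u = f`, `v = W - log E[e^W]`. -/
lemma expect_mul_le_entropy_add_log (hρ₀ : 0 ≤ ρ) (hρ₁ : ρ ≤ 1) {f : Cfg d n → ℝ}
    (hf : IsDensity d n ρ f) (W : Cfg d n → ℝ) :
    expect d n ρ (fun η => W η * f η)
      ≤ entropy d n ρ f + Real.log (expect d n ρ (fun η => Real.exp (W η))) := by
  set Z := expect d n ρ (fun η => Real.exp (W η))
  have hZ : 0 < Z := expect_pos_of_pos hρ₀ hρ₁ fun η => Real.exp_pos _
  have hpt : ∀ η, W η * f η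
      ≤ f η * Real.log (f η) + (-1) * f η + Z⁻¹ * Real.exp (W η) + Real.log Z * f η := by
    intro η
    have := mul_le_mul_log_sub_add_exp (hf.1 η) (W η - Real.log Z)
    rw [Real.exp_sub, Real.exp_log hZ] at this
    linarith [show f η * (W η - Real.log Z) = W η * f η - Real.log Z * f η by ring,
      show Real.exp (W η) / Z = Z⁻¹ * Real.exp (W η) by ring]
  refine (expect_mono hρ₀ hρ₁ hpt).trans_eq ?_
  simp only [expect_add, expect_const_mul, hf.2]
  rw [inv_mul_cancel₀ hZ.ne', entropy]
  ring

lemma expect_exp_mul_le (hρ₀ : 0 ≤ ρ) (hρ₁ : ρ ≤ 1) {Y : Cfg d n → ℝ} {K : ℝ}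
    (hmean : expect d n ρ Y = 0) (hY : ∀ η, |Y η| ≤ K) (s : ℝ) :
    expect d n ρ (fun η => Real.exp (s * Y η)) ≤ Real.exp ((s * K) ^ 2 * Real.exp (|s| * K)) := by
  set b := (s * K) ^ 2 * Real.exp (|s| * K)
  have hsY : ∀ η, (s * Y η) ^ 2 * Real.exp |s * Y η| ≤ b := fun η => by
    have habs : |s * Y η| ≤ |s| * K := by
      rw [abs_mul]
      exact mul_le_mul_of_nonneg_left (hY η) (abs_nonneg s)
    calc (s * Y η) ^ 2 * Real.exp |s * Y η| = |s * Y η| ^ 2 * Real.exp |s * Y η| := by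
          rw [sq_abs]
      _ ≤ (|s| * K) ^ 2 * Real.exp (|s| * K) := by gcongr
      _ = b := by rw [mul_pow, sq_abs, ← mul_pow]
  calc expect d n ρ (fun η => Real.exp (s * Y η))
      ≤ expect d n ρ (fun η => (1 + b) + s * Y η) := expect_mono hρ₀ hρ₁ fun η => by
        linarith [exp_le_one_add_add_sq_mul_exp_abs (s * Y η), hsY η]
    _ = 1 + b := by rw [expect_add, expect_fun_const, expect_const_mul, hmean, mul_zero, add_zero]
    _ ≤ Real.exp b := by linarith [Real.add_one_le_exp b]

lemma expect_exp_sum_le_of_pairwiseDisjoint (hρ₀ : 0 ≤ ρ) (hρ₁ : ρ ≤ 1) {ι : Type*}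
    [DecidableEq ι] (s : Finset ι) {Y : ι → Cfg d n → ℝ} {A : ι → Finset (Torus d n)} {K : ℝ}
    (hdep : ∀ i ∈ s, DepOn (Y i) (A i)) (hdisj : (s : Set ι).PairwiseDisjoint A)
    (hmean : ∀ i ∈ s, expect d n ρ (Y i) = 0) (hY : ∀ i ∈ s, ∀ η, |Y i η| ≤ K) (a : ι → ℝ) :
    expect d n ρ (fun η => Real.exp (∑ i ∈ s, a i * Y i η))
      ≤ Real.exp (∑ i ∈ s, (a i * K) ^ 2 * Real.exp (|a i| * K)) := by
  simp only [Real.exp_sum]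
  rw [expect_prod_of_depOn s (fun i hi η ζ hηζ => by rw [hdep i hi η ζ hηζ]) hdisj]
  exact prod_le_prod (fun i _ => expect_nonneg_of_nonneg hρ₀ hρ₁ fun η => (Real.exp_pos _).le)
    fun i hi => expect_exp_mul_le hρ₀ hρ₁ (hmean i hi) (hY i hi) (a i)

/-- Jensen's inequality for `exp` over the colour classes reduces the bound to the independent
case within each class, with `a` replaced by `card κ • a`. -/
lemma expect_exp_sum_le_of_coloring (hρ₀ : 0 ≤ ρ) (hρ₁ : ρ ≤ 1) {ι κ : Type*} [Fintype ι]
    [DecidableEq ι] [Fintype κ] [Nonempty κ] [DecidableEq κ] {Y : ι → Cfg d n → ℝ}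
    {A : ι → Finset (Torus d n)} {K : ℝ} (col : ι → κ)
    (hcol : ∀ i j, col i = col j → i ≠ j → Disjoint (A i) (A j)) (hdep : ∀ i, DepOn (Y i) (A i))
    (hmean : ∀ i, expect d n ρ (Y i) = 0) (hY : ∀ i η, |Y i η| ≤ K) (a : ι → ℝ) :
    expect d n ρ (fun η => Real.exp (∑ i, a i * Y i η))
      ≤ Real.exp (∑ i, (Fintype.card κ * a i * K) ^ 2 * Real.exp (|Fintype.card κ * a i| * K)) := by
  set p : ℝ := (Fintype.card κ : ℝ)
  have hp : 0 < p := Nat.cast_pos.mpr Fintype.card_pos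
  set bound := Real.exp (∑ i, (p * a i * K) ^ 2 * Real.exp (|p * a i| * K))
  have hclass : ∀ c, expect d n ρ (fun η =>
      Real.exp (∑ i with col i = c, (p * a i) * Y i η)) ≤ bound := fun c => by
    refine (expect_exp_sum_le_of_pairwiseDisjoint hρ₀ hρ₁ _ (fun i _ => hdep i)
      (fun i hi j hj hij => hcol i j ((mem_filter.mp hi).2.trans (mem_filter.mp hj).2.symm) hij)
      (fun i _ => hmean i) (fun i _ => hY i) _).trans ?_
    exact Real.exp_le_exp.mpr
      (sum_le_sum_of_subset_of_nonneg (filter_subset _ _) fun i _ _ => by positivity)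
  calc expect d n ρ (fun η => Real.exp (∑ i, a i * Y i η))
      ≤ expect d n ρ (fun η => ∑ c, p⁻¹ * Real.exp (∑ i with col i = c, (p * a i) * Y i η)) :=
        expect_mono hρ₀ hρ₁ fun η => by
          rw [← sum_fiberwise univ col]
          refine (exp_sum_le_sum_exp_card_mul _).trans_eq (sum_congr rfl fun c _ => ?_)
          simp only [mul_sum, mul_assoc]
          rfl
    _ ≤ ∑ _c : κ, p⁻¹ * bound := by
        rw [expect_sum]
        refine sum_le_sum fun c _ => ?_
        rw [expect_const_mul]
        exact mul_le_mul_of_nonneg_left (hclass c) (by positivity)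
    _ = bound := by
        rw [sum_const, card_univ, nsmul_eq_mul, ← mul_assoc, mul_inv_cancel₀ hp.ne', one_mul]

lemma expect_exp_abs_sum_le_of_coloring (hρ₀ : 0 ≤ ρ) (hρ₁ : ρ ≤ 1) {ι κ : Type*} [Fintype ι]
    [DecidableEq ι] [Fintype κ] [Nonempty κ] [DecidableEq κ] {Y : ι → Cfg d n → ℝ}
    {A : ι → Finset (Torus d n)} {K : ℝ} (col : ι → κ)
    (hcol : ∀ i j, col i = col j → i ≠ j → Disjoint (A i) (A j)) (hdep : ∀ i, DepOn (Y i) (A i))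
    (hmean : ∀ i, expect d n ρ (Y i) = 0) (hY : ∀ i η, |Y i η| ≤ K) {a : ι → ℝ} {α : ℝ}
    (ha : ∀ i, |a i| ≤ α) :
    expect d n ρ (fun η => Real.exp |∑ i, a i * Y i η|)
      ≤ 2 * Real.exp (Fintype.card ι *
        ((Fintype.card κ * α * K) ^ 2 * Real.exp (Fintype.card κ * α * K))) := by
  set p : ℝ := (Fintype.card κ : ℝ)
  set B := Fintype.card ι * ((p * α * K) ^ 2 * Real.exp (p * α * K))
  have hsigned : ∀ b : ι → ℝ, (∀ i, |b i| ≤ α) →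
      expect d n ρ (fun η => Real.exp (∑ i, b i * Y i η)) ≤ Real.exp B := fun b hb => by
    refine (expect_exp_sum_le_of_coloring hρ₀ hρ₁ col hcol hdep hmean hY b).trans
      (Real.exp_le_exp.mpr ?_)
    refine (sum_le_card_nsmul univ _ ((p * α * K) ^ 2 * Real.exp (p * α * K))
      fun i _ => ?_).trans_eq (by rw [card_univ, nsmul_eq_mul])
    have hK : 0 ≤ K := (abs_nonneg _).trans (hY i fun _ => false)
    have hpb : |p * b i| ≤ p * α := by
      rw [abs_mul, Nat.abs_cast]
      exact mul_le_mul_of_nonneg_left (hb i) (Nat.cast_nonneg _)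
    calc (p * b i * K) ^ 2 * Real.exp (|p * b i| * K)
        = (|p * b i| * K) ^ 2 * Real.exp (|p * b i| * K) := by simp only [mul_pow, sq_abs]
      _ ≤ (p * α * K) ^ 2 * Real.exp (p * α * K) := by gcongr
  calc expect d n ρ (fun η => Real.exp |∑ i, a i * Y i η|)
      ≤ expect d n ρ (fun η =>
          Real.exp (∑ i, a i * Y i η) + Real.exp (∑ i, -a i * Y i η)) :=
        expect_mono hρ₀ hρ₁ fun η => by simpa [neg_mul, sum_neg_distrib] using Real.exp_abs_le _
    _ ≤ Real.exp B + Real.exp B := by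
        rw [expect_add]
        exact add_le_add (hsigned a ha) (hsigned _ fun i => (abs_neg (a i)).trans_le (ha i))
    _ = 2 * Real.exp B := by ring

lemma abs_le_supNorm (F : Torus d n → ℝ) (x : Torus d n) :
    |F x| ≤ supNorm F :=
  le_ciSup (f := fun y => |F y|) (Finite.bddAbove_range _) x

lemma expect_exp_abs_cylinder_field_le (hρ₀ : 0 ≤ ρ) (hρ₁ : ρ ≤ 1) {h : CylFun d}
    (hfit : FitsCube d h.supp n) {M : ℝ} (hM : ∀ ζ, |h.toFun ζ| ≤ M) (J : Torus d n → ℝ)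
    {γ : ℝ} (hγ : 0 ≤ γ) :
    expect d n ρ (fun η => Real.exp (γ * |∑ x, J x * (cylAt h x η - h.tilde ρ)|))
      ≤ 2 * Real.exp ((n : ℝ) ^ d *
        ((((#h.supp ^ 2 + 1 : ℕ) : ℝ) * (M + |h.tilde ρ|) * γ * supNorm J) ^ 2 *
          Real.exp (((#h.supp ^ 2 + 1 : ℕ) : ℝ) * (M + |h.tilde ρ|) * γ * supNorm J))) := by
  classical
  obtain ⟨col, hcol⟩ := exists_coloring_disjoint_translates
    (S := h.supp.image (toTorus (n := n))) card_image_le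
  have hmom := expect_exp_abs_sum_le_of_coloring hρ₀ hρ₁ col hcol
    (fun x η ζ hηζ => congrArg (· - h.tilde ρ) (cylAt_depOn h x η ζ hηζ))
    (expect_cylAt_sub_tilde hfit) (fun x η => (abs_sub _ _).trans (add_le_add_left (hM _) _))
    (a := fun x => γ * J x) (α := γ * supNorm J) fun x => by
      rw [abs_mul, abs_of_nonneg hγ]
      exact mul_le_mul_of_nonneg_left (abs_le_supNorm J x) hγ
  convert hmom using 3
  · simp only [mul_assoc, ← mul_sum, abs_mul, abs_of_nonneg hγ]
  · simp only [Fintype.card_fin, Fintype.card_fun, ZMod.card]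
    push_cast
    ring_nf

end BernoulliField

/-- entropy-inequality bound (Lemma l35):
`∫ |Σ_x J_x (h(τ_x η) - ~h(ρ))| f dν ≤ (1/γ)(H_n(f) + log 2)
  + C₀ γ n^d ‖J‖²_∞ e^{C₀ γ ‖J‖_∞}`, with `C₀ = C₀(h, ρ)`. -/
theorem cylinder_field_entropy_bound :
    ∀ d : ℕ, 1 ≤ d → ∀ h : CylFun d, ∀ ρ : ℝ, 0 < ρ → ρ < 1 →
    ∃ C₀ : ℝ, ∀ (n : ℕ) [NeZero n], FitsCube d h.supp n →
      ∀ J : Torus d n → ℝ, ∀ γ : ℝ, 0 < γ →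
      ∀ f : Cfg d n → ℝ, IsDensity d n ρ f →
        expect d n ρ (fun η =>
          |∑ x : Torus d n, J x * (cylAt h x η - h.tilde ρ)| * f η)
          ≤ (1 / γ) * (entropy d n ρ f + Real.log 2)
            + C₀ * γ * (n : ℝ) ^ d * supNorm J ^ 2
              * Real.exp (C₀ * γ * supNorm J) := by
  intro d _ h ρ hρ₀ hρ₁
  obtain ⟨M, hM⟩ := h.exists_abs_le
  set c : ℝ := ((#h.supp ^ 2 + 1 : ℕ) : ℝ) * (M + |h.tilde ρ|)
  have hM₀ : 0 ≤ M := (abs_nonneg _).trans (hM fun _ => false)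
  have hc : 0 ≤ c := mul_nonneg (Nat.cast_nonneg _) (by positivity)
  refine ⟨c ^ 2 + c, fun n _ hfit J γ hγ f hf => ?_⟩
  set N := supNorm J
  set V := fun η => |∑ x, J x * (cylAt h x η - h.tilde ρ)|
  set B := (n : ℝ) ^ d * ((c * γ * N) ^ 2 * Real.exp (c * γ * N))
  have hN : 0 ≤ N := (abs_nonneg _).trans (abs_le_supNorm J 0)
  have hZ : 0 < expect d n ρ fun η => Real.exp (γ * V η) :=
    expect_pos_of_pos hρ₀.le hρ₁.le fun η => Real.exp_pos _
  have hlog : Real.log (expect d n ρ fun η => Real.exp (γ * V η)) ≤ Real.log 2 + B := by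
    refine (Real.log_le_log hZ
      (expect_exp_abs_cylinder_field_le hρ₀.le hρ₁.le hfit hM J hγ.le)).trans_eq ?_
    rw [Real.log_mul two_ne_zero (Real.exp_pos _).ne', Real.log_exp]
  have hB : B ≤ γ * ((c ^ 2 + c) * γ * n ^ d * N ^ 2 * Real.exp ((c ^ 2 + c) * γ * N)) := by
    calc B = γ * (c ^ 2 * γ * n ^ d * N ^ 2 * Real.exp (c * γ * N)) := by ring
      _ ≤ _ := by gcongr <;> nlinarith
  have hent := expect_mul_le_entropy_add_log hρ₀.le hρ₁.le hf fun η => γ * V η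
  simp only [mul_assoc, expect_const_mul] at hent
  refine le_of_mul_le_mul_left ?_ hγ
  calc γ * expect d n ρ (fun η => V η * f η) ≤ entropy d n ρ f + Real.log 2 + B := by linarith
    _ ≤ _ := by
      rw [mul_add, ← mul_assoc, mul_one_div_cancel hγ.ne', one_mul]
      linarith
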